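/- arXiv:2111.08152 — 2 statements merged into one kernel-verified Lean document; each statement's English description precedes it below -/
import Mathlib

section
/- Let P, P' be orthogonal projections with δ := ‖P' - P‖ < 1, let F = (I - (P'-P)²)^{-1/2} and V = F(I + (P'-P)(2P-I)). Then ‖V - I‖ ≤ ‖F - I‖ + δ‖F‖ ≤ (1+δ)/√(1-δ²) - 1 = √((1+δ)/(1-δ)) - 1. -/
open scoped Matrix

open scoped Matrix.Norms.L2Operator

/-!
Write `V - 1 = (F - 1) + F (P' - P) U` with `U = 2P - 1`. Since `P` is an orthogonal projection,
`U` is unitary, so right multiplication by `U` is isometric and `‖V - 1‖ ≤ ‖F - 1‖ + δ‖F‖`.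
The remaining bounds are the given estimates on `F` and the factorisation
`1 - δ² = (1 + δ)(1 - δ)`.
-/

theorem norm_mul_one_add_mul_unitary_sub_one_le {E : Type*} [NormedRing E] [StarRing E]
    [CStarRing E] (F D : E) {U : E} (hU : U ∈ unitary E) :
    ‖F * (1 + D * U) - 1‖ ≤ ‖F - 1‖ + ‖D‖ * ‖F‖ := by
  calc ‖F * (1 + D * U) - 1‖ = ‖(F - 1) + F * (D * U)‖ := by noncomm_ring
    _ ≤ ‖F - 1‖ + ‖F‖ * ‖D * U‖ := norm_add_le_of_le le_rfl (norm_mul_le _ _)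
    _ = ‖F - 1‖ + ‖D‖ * ‖F‖ := by rw [CStarRing.norm_mul_mem_unitary D hU, mul_comm]

theorem one_add_div_sqrt_one_sub_sq {δ : ℝ} (h : 0 ≤ 1 + δ) :
    (1 + δ) / Real.sqrt (1 - δ ^ 2) = Real.sqrt ((1 + δ) / (1 - δ)) := by
  rw [show 1 - δ ^ 2 = (1 + δ) * (1 - δ) by ring, Real.sqrt_mul h, ← div_div, Real.div_sqrt,
    Real.sqrt_div h]

theorem V_minus_I_bound_general {n : ℕ} (P P' F V : Matrix (Fin n) (Fin n) ℂ)
    (hP : P * P = P) (hPsa : Pᴴ = P)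
    (hFnorm : ‖F‖ ≤ 1 / Real.sqrt (1 - ‖P' - P‖ ^ 2))
    (hF1 : ‖F - 1‖ ≤ 1 / Real.sqrt (1 - ‖P' - P‖ ^ 2) - 1)
    (hV : V = F * (1 + (P' - P) * (2 * P - 1))) :
    ‖V - 1‖ ≤ ‖F - 1‖ + ‖P' - P‖ * ‖F‖ ∧
    ‖F - 1‖ + ‖P' - P‖ * ‖F‖ ≤ (1 + ‖P' - P‖) / Real.sqrt (1 - ‖P' - P‖ ^ 2) - 1 ∧
    (1 + ‖P' - P‖) / Real.sqrt (1 - ‖P' - P‖ ^ 2) - 1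
      = Real.sqrt ((1 + ‖P' - P‖) / (1 - ‖P' - P‖)) - 1 := by
  have hδ : 0 ≤ ‖P' - P‖ := norm_nonneg _
  have hU : 2 * P - 1 ∈ unitary (Matrix (Fin n) (Fin n) ℂ) :=
    IsStarProjection.two_mul_sub_one_mem_unitary ⟨hP, hPsa⟩
  refine ⟨hV ▸ norm_mul_one_add_mul_unitary_sub_one_le F (P' - P) hU, ?_,
    by rw [one_add_div_sqrt_one_sub_sq (by linarith)]⟩
  rw [← mul_one_div]
  nlinarith

/-- With `δ = ‖P' - P‖ < 1`, `F = (I - (P'-P)²)^{-1/2}` (so that `‖F‖ ≤ (1-δ²)^{-1/2}`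
and `‖F - I‖ ≤ (1-δ²)^{-1/2} - 1`), and `V = F(I + (P'-P)(2P-I))`, we have
`‖V - I‖ ≤ ‖F - I‖ + δ‖F‖ ≤ (1+δ)/√(1-δ²) - 1 = √((1+δ)/(1-δ)) - 1`. -/
theorem V_minus_I_bound {n : ℕ} (P P' F V : Matrix (Fin n) (Fin n) ℂ)
    (hP : P * P = P) (hPsa : Pᴴ = P) (hP' : P' * P' = P') (hP'sa : P'ᴴ = P')
    (hδ : ‖P' - P‖ < 1)
    (hFnorm : ‖F‖ ≤ 1 / Real.sqrt (1 - ‖P' - P‖ ^ 2))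
    (hF1 : ‖F - 1‖ ≤ 1 / Real.sqrt (1 - ‖P' - P‖ ^ 2) - 1)
    (hV : V = F * (1 + (P' - P) * (2 * P - 1))) :
    ‖V - 1‖ ≤ ‖F - 1‖ + ‖P' - P‖ * ‖F‖ ∧
    ‖F - 1‖ + ‖P' - P‖ * ‖F‖ ≤ (1 + ‖P' - P‖) / Real.sqrt (1 - ‖P' - P‖ ^ 2) - 1 ∧
    (1 + ‖P' - P‖) / Real.sqrt (1 - ‖P' - P‖ ^ 2) - 1
      = Real.sqrt ((1 + ‖P' - P‖) / (1 - ‖P' - P‖)) - 1 :=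
  V_minus_I_bound_general P P' F V hP hPsa hFnorm hF1 hV
end

section
/- Let κ ≥ 2 and ε ∈ (0,1), and set ℓ = cosh^{-1}(1/ε)/cosh^{-1}(1/cos(1/κ)). Then ℓ ≤ κ·ln(2/ε). -/
/-!
The numerator is small because `√(x² - 1) ≤ x` gives `arcosh x ≤ log (2x)`. The denominator is
large because `cos t · cosh t ≤ 1` for `|t| ≤ 1` (compare the Taylor bounds of `cos` and of
`exp (t²/2) ≥ cosh t`), i.e. `cosh t ≤ sec t`, so `t ≤ arcosh (sec t)` by monotonicity of `arcosh`.
-/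

/-- The inverse hyperbolic cosine, `arcosh x = log (x + √(x² - 1))`. -/
noncomputable def arcosh (x : ℝ) : ℝ := Real.log (x + Real.sqrt (x ^ 2 - 1))

lemma arcosh_eq_real_arcosh (x : ℝ) : arcosh x = Real.arcosh x := rfl

namespace Real

lemma arcosh_le_log_two_mul {x : ℝ} (hx : 1 ≤ x) : arcosh x ≤ log (2 * x) := by
  have hsqrt : √(x ^ 2 - 1) ≤ x :=
    (sqrt_le_sqrt (by linarith)).trans_eq (sqrt_sq (by linarith))
  exact log_le_log (by positivity) (by linarith)

lemma cos_mul_cosh_le_one {t : ℝ} (ht : |t| ≤ 1) : cos t * cosh t ≤ 1 := by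
  obtain ⟨ht₁, ht₂⟩ := abs_le.1 ht
  have hcos_pos : 0 < cos t :=
    cos_pos_of_mem_Ioo ⟨by linarith [pi_gt_three], by linarith [pi_gt_three]⟩
  have hs : t ^ 2 ≤ 1 := by nlinarith
  have hs0 : 0 ≤ t ^ 2 := sq_nonneg t
  have hcos : cos t ≤ 1 - t ^ 2 / 2 + 5 / 96 * (t ^ 2) ^ 2 := by
    have h4 : |t| ^ 4 = (t ^ 2) ^ 2 := by rw [← sq_abs t]; ring
    linarith [(abs_sub_le_iff.1 (cos_bound ht)).1]
  have hexp : exp (t ^ 2 / 2) ≤ 1 + t ^ 2 / 2 + (t ^ 2) ^ 2 / 8 + (t ^ 2) ^ 3 / 36 := by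
    have := exp_bound' (x := t ^ 2 / 2) (by positivity) (by linarith) (n := 3) (by norm_num)
    norm_num [Finset.sum_range_succ, Nat.factorial] at this
    linarith
  calc cos t * cosh t ≤ cos t * exp (t ^ 2 / 2) := by gcongr; exact cosh_le_exp_half_sq t
    _ ≤ (1 - t ^ 2 / 2 + 5 / 96 * (t ^ 2) ^ 2) *
          (1 + t ^ 2 / 2 + (t ^ 2) ^ 2 / 8 + (t ^ 2) ^ 3 / 36) := by
      gcongr
      nlinarith
    _ ≤ 1 := by
      generalize t ^ 2 = s at hs hs0 ⊢
      nlinarith [mul_nonneg (mul_nonneg hs0 hs0) (sub_nonneg.2 hs)]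

lemma le_arcosh_inv_cos {t : ℝ} (ht0 : 0 ≤ t) (ht1 : t ≤ 1) : t ≤ arcosh (1 / cos t) := by
  have hcos : 0 < cos t := cos_pos_of_mem_Ioo ⟨by linarith [pi_gt_three], by linarith [pi_gt_three]⟩
  calc t = arcosh (cosh t) := (arcosh_cosh ht0).symm
    _ ≤ arcosh (1 / cos t) := by
      rw [arcosh_le_arcosh (cosh_pos t) (by positivity), le_div_iff₀ hcos, mul_comm]
      exact cos_mul_cosh_le_one (by rwa [abs_of_nonneg ht0])

end Real

/-- For `κ ≥ 2` and `ε ∈ (0,1)`, the Dolph–Chebyshev filter degree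
`ℓ = arcosh(1/ε)/arcosh(1/cos(1/κ))` satisfies `ℓ ≤ κ ln(2/ε)`. -/
theorem chebyshev_degree_bound (κ ε : ℝ) (hκ : 2 ≤ κ) (hε0 : 0 < ε) (hε1 : ε < 1) :
    arcosh (1 / ε) / arcosh (1 / Real.cos (1 / κ)) ≤ κ * Real.log (2 / ε) := by
  simp only [arcosh_eq_real_arcosh]
  have hκ0 : 0 < κ := by linarith
  have ht0 : 0 < 1 / κ := by positivity
  have hden : 1 / κ ≤ Real.arcosh (1 / Real.cos (1 / κ)) :=
    Real.le_arcosh_inv_cos ht0.le ((div_le_one hκ0).2 (by linarith))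
  have hx : 1 ≤ 1 / ε := by rw [le_div_iff₀ hε0]; linarith
  have hnum : Real.arcosh (1 / ε) ≤ Real.log (2 / ε) :=
    mul_one_div 2 ε ▸ Real.arcosh_le_log_two_mul hx
  calc Real.arcosh (1 / ε) / Real.arcosh (1 / Real.cos (1 / κ))
      ≤ Real.arcosh (1 / ε) / (1 / κ) :=
        div_le_div_of_nonneg_left (Real.arcosh_nonneg hx) ht0 hden
    _ = κ * Real.arcosh (1 / ε) := by field_simp
    _ ≤ κ * Real.log (2 / ε) := by gcongr
end
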